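/- arXiv:2502.02058 — 2 statements merged into one kernel-verified Lean document; each statement's English description precedes it below -/
import Mathlib

section
/- If v is a divergence-free Schwartz vector field on ℝⁿ, then for every unit vector ω and every p ∈ ℝ, ∫_{H_{ω,p}} ⟨v(x), ω⟩ dx = 0, i.e., divergence-free vector fields lie in the kernel of the transversal Radon transform 𝒯¹. -/
open MeasureTheory
open scoped RealInnerProductSpace
noncomputable section

abbrev E (n : ℕ) := EuclideanSpace ℝ (Fin n)

/-- Tensor field of order `m` on ℝⁿ, given by its components. -/
abbrev TF (n m : ℕ) := E n → (Fin m → Fin n) → ℝ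

/-- Partial derivative in the `i`-th coordinate direction. -/
def pd {n : ℕ} (i : Fin n) (g : E n → ℝ) (x : E n) : ℝ :=
  fderiv ℝ g x (EuclideanSpace.single i 1)

/-- All components of the tensor field are Schwartz functions. -/
def IsSchwartzTF {n m : ℕ} (f : TF n m) : Prop :=
  ∀ idx, ∃ g : SchwartzMap (E n) ℝ, (fun x => f x idx) = ⇑g

/-- The tensor field is symmetric. -/
def IsSymTF {n m : ℕ} (f : TF n m) : Prop :=
  ∀ (x : E n) (σ : Equiv.Perm (Fin m)) (idx : Fin m → Fin n), f x (idx ∘ σ) = f x idx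

/-- Divergence δ of a tensor field (contraction of the derivative in the last index). -/
def div' {n m : ℕ} : TF n m → TF n (m - 1) :=
  match m with
  | 0 => fun _ => fun _ _ => 0
  | _ + 1 => fun u x idx => ∑ i : Fin n, pd i (fun y => u y (Fin.snoc idx i)) x

/-- Iterated divergence δ^k. -/
def divIter {n m : ℕ} : (k : ℕ) → TF n m → TF n (m - k)
  | 0, u => u
  | k + 1, u => div' (divIter k u)

/-- Symmetrization of an `m`-tensor (average over permutations of the indices). -/
def symz {n m : ℕ} (T : (Fin m → Fin n) → ℝ) : (Fin m → Fin n) → ℝ :=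
  fun idx => (m.factorial : ℝ)⁻¹ * ∑ σ : Equiv.Perm (Fin m), T (idx ∘ σ)

/-- Symmetrized derivative (inner differentiation) d. -/
def dsym {n m : ℕ} (v : TF n m) : TF n (m + 1) :=
  fun x => symz (fun idx => pd (idx (Fin.last m)) (fun y => v y (idx ∘ Fin.castSucc)) x)

/-- Iterated symmetrized derivative d^k. -/
def dIter {n m : ℕ} : (k : ℕ) → TF n m → TF n (m + k)
  | 0, v => v
  | k + 1, v => dsym (dIter k v)

/-- Componentwise Laplacian. -/
def lap {n m : ℕ} (u : TF n m) : TF n m :=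
  fun x idx => ∑ i : Fin n, pd i (fun y => pd i (fun z => u z idx) y) x

/-- Full contraction of an `m`-tensor field with a family of `m` vectors
(equivalently, with the symmetric product of those vectors when the field is symmetric). -/
def contr {n m : ℕ} (f : TF n m) (v : Fin m → E n) (x : E n) : ℝ :=
  ∑ idx : Fin m → Fin n, f x idx * ∏ j, v j (idx j)

/-- Contraction with a vector `w` in the last index. -/
def jv {n m : ℕ} (w : E n) : TF n m → TF n (m - 1) :=
  match m with
  | 0 => fun _ => fun _ _ => 0
  | _ + 1 => fun u x idx => ∑ i : Fin n, w i * u x (Fin.snoc idx i)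

/-- Iterated contraction with `w` in the last `k` indices. -/
def jvIter {n m : ℕ} (w : E n) : (k : ℕ) → TF n m → TF n (m - k)
  | 0, u => u
  | k + 1, u => jv w (jvIter w k u)

/-- Integral of a scalar function over the hyperplane `{x : ⟪x, ω⟫ = p}`. -/
def hypInt {n : ℕ} (h : E n → ℝ) (ω : E n) (p : ℝ) : ℝ :=
  ∫ y : ((ℝ ∙ ω)ᗮ : Submodule ℝ (E n)), h (p • ω + (y : E n))

/-- The transversal Radon transform 𝒯^m of a symmetric m-tensor field. -/
def TRT {n m : ℕ} (g : TF n m) (ω : E n) (p : ℝ) : ℝ :=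
  hypInt (contr g (fun _ => ω)) ω p

/-!
For fixed `ω`, consider the flux `F t = ∫_{H_{ω,t}} ⟨v, ω⟩` through the parallel hyperplanes.
Parametrising them as `t • ω + y` with `y ∈ (ℝ ∙ ω)ᗮ`, a Schwartz function restricted to any of
them is bounded by one integrable function of `y`, since `‖y‖ ≤ ‖t • ω + y‖`. Dominated
convergence then gives `F t → 0` as `t → ∞`, and differentiation under the integral gives
`F' t = ∫_{H_{ω,t}} ∂_ω ⟨v, ω⟩`. The vectors `‖ω‖² eᵢ - ωᵢ ω` are tangent to the hyperplanes, so
`∂_ω ⟨v, ω⟩ = ‖ω‖² div v - ∑ᵢ ∂_{‖ω‖² eᵢ - ωᵢ ω} vᵢ`; tangential derivatives integrate to zero over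
a hyperplane and `div v = 0`, so `F' = 0`. Hence `F` is constant and tends to `0`, so `F = 0`.
-/

open Filter Topology
open scoped SchwartzMap LineDeriv

theorem norm_le_norm_add_of_inner_eq_zero {V : Type*} [NormedAddCommGroup V]
    [InnerProductSpace ℝ V] {x y : V} (h : ⟪x, y⟫ = 0) : ‖y‖ ≤ ‖x + y‖ := by
  have := norm_add_sq_eq_norm_sq_add_norm_sq_real h
  nlinarith [norm_nonneg y, norm_nonneg (x + y), mul_self_nonneg ‖x‖]

theorem smul_mem_orthogonal_orthogonal_singleton {V : Type*} [NormedAddCommGroup V]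
    [InnerProductSpace ℝ V] (t : ℝ) (ω : V) : t • ω ∈ (ℝ ∙ ω)ᗮᗮ :=
  Submodule.le_orthogonal_orthogonal _
    (Submodule.smul_mem _ t (Submodule.mem_span_singleton_self ω))

theorem EuclideanSpace.norm_sq_smul_single_sub_mem_orthogonal {ι : Type*} [Fintype ι]
    [DecidableEq ι] (ω : EuclideanSpace ℝ ι) (i : ι) :
    ‖ω‖ ^ 2 • EuclideanSpace.single i (1 : ℝ) - ω i • ω ∈ (ℝ ∙ ω)ᗮ := by
  rw [Submodule.mem_orthogonal_singleton_iff_inner_right, inner_sub_right, real_inner_smul_right,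
    real_inner_smul_right, EuclideanSpace.inner_single_right, real_inner_self_eq_norm_sq]
  simp only [one_mul, conj_trivial]
  ring

namespace SchwartzMap

variable {V F : Type*} [NormedAddCommGroup F] [NormedSpace ℝ F]

theorem exists_norm_le_mul_one_add_norm_rpow_neg [NormedAddCommGroup V] [NormedSpace ℝ V]
    (f : 𝓢(V, F)) (k : ℕ) : ∃ C, 0 ≤ C ∧ ∀ x, ‖f x‖ ≤ C * (1 + ‖x‖) ^ (-(k : ℝ)) := by
  refine ⟨2 ^ k * (Finset.Iic (k, 0)).sup (fun m => SchwartzMap.seminorm ℝ m.1 m.2) f,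
    by positivity, fun x => ?_⟩
  rw [Real.rpow_neg (by positivity), ← div_eq_mul_inv, le_div_iff₀ (by positivity),
    Real.rpow_natCast, mul_comm]
  simpa using one_add_le_sup_seminorm_apply (𝕜 := ℝ) (m := (k, 0)) le_rfl le_rfl f x

variable [NormedAddCommGroup V] [InnerProductSpace ℝ V] [FiniteDimensional ℝ V]
  [MeasurableSpace V] [BorelSpace V]

theorem exists_integrable_bound_of_mem_orthogonal (f : 𝓢(V, F)) (K : Submodule ℝ V) :
    ∃ b : K → ℝ, Integrable b ∧ ∀ x ∈ Kᗮ, ∀ y : K, ‖f (x + y)‖ ≤ b y := by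
  obtain ⟨C, hC0, hC⟩ := f.exists_norm_le_mul_one_add_norm_rpow_neg (Module.finrank ℝ K + 1)
  refine ⟨fun y => C * (1 + ‖y‖) ^ (-((Module.finrank ℝ K + 1 : ℕ) : ℝ)),
    (integrable_one_add_norm (by push_cast; linarith)).const_mul C, fun x hx y => ?_⟩
  have hxy : ‖(y : V)‖ ≤ ‖x + y‖ :=
    norm_le_norm_add_of_inner_eq_zero (Submodule.inner_left_of_mem_orthogonal y.2 hx)
  refine (hC _).trans (mul_le_mul_of_nonneg_left ?_ hC0)
  exact Real.rpow_le_rpow_of_nonpos (by positivity) (by simpa using hxy)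
    (by simp only [Left.neg_nonpos_iff]; positivity)

theorem integrable_comp_add_of_mem_orthogonal (f : 𝓢(V, F)) {K : Submodule ℝ V} {x : V}
    (hx : x ∈ Kᗮ) : Integrable fun y : K => f (x + y) := by
  obtain ⟨b, hb, hfb⟩ := f.exists_integrable_bound_of_mem_orthogonal K
  exact hb.mono' (by fun_prop) (.of_forall (hfb x hx))

theorem integral_lineDerivOp_comp_add_eq_zero (f : 𝓢(V, ℝ)) {K : Submodule ℝ V} {x u : V}
    (hx : x ∈ Kᗮ) (hu : u ∈ K) : ∫ y : K, ∂_{u} f (x + y) = 0 := by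
  have hderiv (y : K) : HasFDerivAt (fun z : K => f (x + z))
      ((fderiv ℝ f (x + y)).comp K.subtypeL) y :=
    f.differentiableAt.hasFDerivAt.comp y (K.subtypeL.hasFDerivAt.const_add x)
  have h := integral_mul_fderiv_eq_neg_fderiv_mul_of_integrable (μ := volume)
    (f := fun _ : K => (1 : ℝ)) (g := fun z : K => f (x + z)) (v := ⟨u, hu⟩)
    (by simp)
    (by simpa [(hderiv _).fderiv] using (∂_{u} f).integrable_comp_add_of_mem_orthogonal hx)
    (by simpa using f.integrable_comp_add_of_mem_orthogonal hx)
    (fun _ _ => differentiableAt_const _) (fun y _ => (hderiv y).differentiableAt)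
  simpa [(hderiv _).fderiv, lineDerivOp_apply_eq_fderiv] using h

theorem hasDerivAt_integral_smul_add (f : 𝓢(V, F)) (ω : V) (t : ℝ) :
    HasDerivAt (fun s => ∫ y : (ℝ ∙ ω)ᗮ, f (s • ω + y))
      (∫ y : (ℝ ∙ ω)ᗮ, ∂_{ω} f (t • ω + y)) t := by
  obtain ⟨b, hb, hfb⟩ := (∂_{ω} f).exists_integrable_bound_of_mem_orthogonal (ℝ ∙ ω)ᗮ
  refine (hasDerivAt_integral_of_dominated_loc_of_deriv_le (bound := b) univ_mem
    (.of_forall fun s => by fun_prop) (f.integrable_comp_add_of_mem_orthogonal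
      (smul_mem_orthogonal_orthogonal_singleton t ω)) (by fun_prop)
    (.of_forall fun y s _ => hfb _ (smul_mem_orthogonal_orthogonal_singleton s ω) y) hb
    (.of_forall fun y s _ => ?_)).2
  have hline : HasDerivAt (fun s : ℝ => s • ω + (y : V)) ω s := by
    simpa using ((hasDerivAt_id s).smul_const ω).add_const (y : V)
  exact f.differentiableAt.hasFDerivAt.comp_hasDerivAt s hline

theorem tendsto_integral_smul_add_atTop (f : 𝓢(V, F)) {ω : V} (hω : ω ≠ 0) :
    Tendsto (fun t : ℝ => ∫ y : (ℝ ∙ ω)ᗮ, f (t • ω + y)) atTop (𝓝 0) := by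
  obtain ⟨b, hb, hfb⟩ := f.exists_integrable_bound_of_mem_orthogonal (ℝ ∙ ω)ᗮ
  rw [← integral_zero (ℝ ∙ ω)ᗮ F]
  refine tendsto_integral_filter_of_dominated_convergence b (.of_forall fun t => by fun_prop)
    (.of_forall fun t => .of_forall (hfb _ (smul_mem_orthogonal_orthogonal_singleton t ω))) hb
    (.of_forall fun y => f.tendsto_cocompact.comp ?_)
  rw [← Metric.cobounded_eq_cocompact, ← tendsto_norm_atTop_iff_cobounded]
  refine tendsto_atTop_mono (fun t => ?_) (tendsto_id.atTop_mul_const (norm_pos_iff.2 hω))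
  have hyω : ⟪(y : V), t • ω⟫ = 0 :=
    Submodule.inner_right_of_mem_orthogonal y.2 (smul_mem_orthogonal_orthogonal_singleton t ω)
  calc id t * ‖ω‖ ≤ ‖t • ω‖ := by rw [norm_smul]; gcongr; exact le_abs_self t
    _ ≤ ‖t • ω + y‖ := by rw [add_comm]; exact norm_le_norm_add_of_inner_eq_zero hyω

end SchwartzMap

theorem integral_sum_mul_lineDerivOp_eq_zero_of_divergence_free {n : ℕ}
    (g : Fin n → 𝓢(E n, ℝ)) (hdiv : ∀ x, ∑ i, pd i (g i) x = 0) (ω : E n) (t : ℝ) :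
    ∫ y : (ℝ ∙ ω)ᗮ, ∑ i, ω i * ∂_{ω} (g i) (t • ω + y) = 0 := by
  set w : Fin n → E n := fun i => ‖ω‖ ^ 2 • EuclideanSpace.single i 1 - ω i • ω
  have hpointwise (x : E n) : ∑ i, ω i * ∂_{ω} (g i) x = -∑ i, ∂_{w i} (g i) x := by
    have hx := hdiv x
    simp only [pd] at hx
    simp only [w, SchwartzMap.lineDerivOp_apply_eq_fderiv, map_sub, map_smul, smul_eq_mul,
      Finset.sum_sub_distrib, ← Finset.mul_sum, hx]
    ring
  simp_rw [hpointwise]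
  rw [integral_neg, integral_finsetSum _ fun i _ =>
    (∂_{w i} (g i)).integrable_comp_add_of_mem_orthogonal
      (smul_mem_orthogonal_orthogonal_singleton t ω)]
  simp only [neg_eq_zero]
  exact Finset.sum_eq_zero fun i _ => (g i).integral_lineDerivOp_comp_add_eq_zero
    (smul_mem_orthogonal_orthogonal_singleton t ω)
    (EuclideanSpace.norm_sq_smul_single_sub_mem_orthogonal ω i)

theorem stmt11_general {n : ℕ} (v : Fin n → E n → ℝ)
    (hS : ∀ i, ∃ g : SchwartzMap (E n) ℝ, v i = ⇑g)
    (hdiv : ∀ x, ∑ i, pd i (v i) x = 0)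
    (ω : E n) (p : ℝ) :
    hypInt (fun x => ∑ i, v i x * ω i) ω p = 0 := by
  choose g hg using hS
  obtain rfl : v = fun i => ⇑(g i) := funext hg
  rcases eq_or_ne ω 0 with rfl | hω
  · simp [hypInt]
  set f : 𝓢(E n, ℝ) := ∑ i, ω i • g i
  have hflux : (fun x => ∑ i, g i x * ω i) = f := by ext x; simp [f, mul_comm]
  have hderiv (t : ℝ) : HasDerivAt (hypInt f ω) 0 t := by
    have hzero : ∫ y : (ℝ ∙ ω)ᗮ, ∂_{ω} f (t • ω + y) = 0 := by
      simpa [f, LineDeriv.lineDerivOp_sum, LineDeriv.lineDerivOp_smul] using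
        integral_sum_mul_lineDerivOp_eq_zero_of_divergence_free g hdiv ω t
    exact hzero ▸ f.hasDerivAt_integral_smul_add ω t
  have hconst (t : ℝ) : hypInt f ω t = hypInt f ω p :=
    is_const_of_deriv_eq_zero (fun s => (hderiv s).differentiableAt)
      (fun s => (hderiv s).deriv) t p
  have hlim : Tendsto (hypInt f ω) atTop (𝓝 0) := f.tendsto_integral_smul_add_atTop hω
  rw [hflux]
  exact tendsto_nhds_unique (tendsto_const_nhds.congr fun t => (hconst t).symm) hlim

/-- Divergence-free Schwartz vector fields lie in the kernel of the transversal Radon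
transform 𝒯¹. -/
theorem stmt11 {n : ℕ} (v : Fin n → E n → ℝ)
    (hS : ∀ i, ∃ g : SchwartzMap (E n) ℝ, v i = ⇑g)
    (hdiv : ∀ x, ∑ i, pd i (v i) x = 0)
    (ω : E n) (hω : ‖ω‖ = 1) (p : ℝ) :
    hypInt (fun x => ∑ i, v i x * ω i) ω p = 0 :=
  stmt11_general v hS hdiv ω p

end
end

section
/- Let f = dv, where v is a Schwartz symmetric (m−1)-tensor field on ℝⁿ. Then the longitudinal Radon transform of f vanishes: for every unit vector ω, orthonormal basis ω₁,...,ω_{n−1} of ω^⊥, p ∈ ℝ, and nonnegative integers ℓ₁,...,ℓ_{n−1} summing to m, ∫_{H_{ω,p}} ⟨(dv)(x), ω₁^{⊙ℓ₁} ⊙ ··· ⊙ ω_{n−1}^{⊙ℓ_{n−1}}⟩ dx = 0. -/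
open MeasureTheory
open scoped RealInnerProductSpace
noncomputable section

/-! Expanding the symmetrization, `⟨dv, u₁ ⊙ ⋯ ⊙ u_{m+1}⟩` is the average over permutations `σ`
of the derivatives of the scalar Schwartz functions `⟨v, u_{σ 1} ⊙ ⋯ ⊙ u_{σ m}⟩` in the direction
`u_{σ (m+1)}`. All these directions are tangent to the hyperplane, and on a finite-dimensional
space the integral of a directional derivative of a Schwartz function vanishes. -/

open scoped SchwartzMap

namespace SchwartzMap

variable {D F : Type*} [NormedAddCommGroup D] [NormedSpace ℝ D]
  [NormedAddCommGroup F] [NormedSpace ℝ F]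

theorem integrable_fderiv_apply [MeasurableSpace D] [BorelSpace D] [SecondCountableTopology D]
    (μ : Measure D) [μ.HasTemperateGrowth] (g : 𝓢(D, F)) (a : D) :
    Integrable (fun x => fderiv ℝ g x a) μ := by
  convert (LineDeriv.lineDerivOp a g).integrable (μ := μ) using 1
  exact funext fun x => (lineDerivOp_apply_eq_fderiv a g x).symm

theorem integral_fderiv_apply_eq_zero [MeasurableSpace D] [BorelSpace D] [FiniteDimensional ℝ D]
    (μ : Measure D) [μ.IsAddHaarMeasure] (g : 𝓢(D, F)) (a : D) :
    ∫ x, fderiv ℝ g x a ∂μ = 0 := by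
  -- integrate by parts against the constant function `1`
  have := integral_smul_fderiv_eq_neg_fderiv_smul_of_integrable (μ := μ) (𝕜 := ℝ)
    (f := fun _ => (1 : ℝ)) (g := g) (v := a) (by simp)
    (by simpa using g.integrable_fderiv_apply μ a) (by simpa using g.integrable)
    (fun _ _ => differentiableAt_const _) (fun _ _ => g.differentiableAt)
  simpa using this

def compAddSubtype (K : Submodule ℝ D) (c : D) : 𝓢(D, F) →L[ℝ] 𝓢(K, F) :=
  compCLMOfAntilipschitz ℝ
    ((Function.HasTemperateGrowth.const c).add K.subtypeL.hasTemperateGrowth)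
    ((isometry_add_left c).comp K.subtypeₗᵢ.isometry).antilipschitz

@[simp]
theorem compAddSubtype_apply (K : Submodule ℝ D) (c : D) (g : 𝓢(D, F)) (y : K) :
    compAddSubtype K c g y = g (c + y) := rfl

theorem fderiv_compAddSubtype (K : Submodule ℝ D) (c : D) (g : 𝓢(D, F)) (y a : K) :
    fderiv ℝ (compAddSubtype K c g) y a = fderiv ℝ g (c + y) a := by
  have hA : HasFDerivAt (fun y : K => c + (y : D)) K.subtypeL y :=
    K.subtypeL.hasFDerivAt.const_add c
  exact congrArg (· a) (g.differentiableAt.hasFDerivAt.comp y hA).fderiv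

end SchwartzMap

theorem sum_pd_mul_eq_fderiv {n : ℕ} (g : E n → ℝ) (x w : E n) :
    ∑ k, pd k g x * w k = fderiv ℝ g x w := by
  classical
  conv_rhs => rw [← (EuclideanSpace.basisFun (Fin n) ℝ).sum_repr w]
  simp [pd, mul_comm]

theorem contr_symz {n m : ℕ} (f : TF n m) (u : Fin m → E n) (x : E n) :
    contr (fun y => symz (f y)) u x =
      (m.factorial : ℝ)⁻¹ * ∑ σ : Equiv.Perm (Fin m), contr f (u ∘ σ) x := by
  simp only [contr, symz, Finset.sum_mul, Finset.mul_sum, mul_assoc]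
  rw [Finset.sum_comm]
  refine Finset.sum_congr rfl fun σ _ => ?_
  refine Fintype.sum_equiv (σ.symm.arrowCongr (Equiv.refl _)) _ _ fun idx => ?_
  simp [Equiv.arrowCongr, ← Equiv.prod_comp σ (fun j => u j (idx j))]

def derivTF {n m : ℕ} (v : TF n m) : TF n (m + 1) :=
  fun x idx => pd (idx (Fin.last m)) (fun y => v y (idx ∘ Fin.castSucc)) x

theorem dsym_eq_symz_derivTF {n m : ℕ} (v : TF n m) : dsym v = fun x => symz (derivTF v x) := rfl

theorem contr_derivTF {n m : ℕ} (v : TF n m) (w : Fin (m + 1) → E n) (x : E n)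
    (hv : ∀ q, DifferentiableAt ℝ (fun y => v y q) x) :
    contr (derivTF v) w x =
      fderiv ℝ (contr v (fun j => w j.castSucc)) x (w (Fin.last m)) := by
  have hsplit : contr (derivTF v) w x =
      ∑ q : Fin m → Fin n, (∑ k, pd k (fun y => v y q) x * w (Fin.last m) k) *
        ∏ j : Fin m, w j.castSucc (q j) := by
    rw [contr, ← (Fin.snocEquiv fun _ => Fin n).sum_comp, Fintype.sum_prod_type, Finset.sum_comm]
    refine Finset.sum_congr rfl fun q _ => ?_
    simp only [derivTF, Fin.snocEquiv_apply, Fin.snoc_last, Fin.prod_univ_castSucc,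
      Fin.snoc_castSucc, Function.comp_def, Finset.sum_mul]
    exact Finset.sum_congr rfl fun k _ => by ring
  unfold contr at hsplit ⊢
  simp only [hsplit, sum_pd_mul_eq_fderiv]
  rw [fderiv_fun_sum fun q _ => (hv q).mul_const _]
  simp only [FunLike.coe_sum, Finset.sum_apply, fderiv_mul_const (hv _), smul_apply, smul_eq_mul,
    mul_comm]

theorem contr_dsym {n m : ℕ} (v : TF n m) (hv : ∀ q, Differentiable ℝ fun y => v y q)
    (u : Fin (m + 1) → E n) (x : E n) :
    contr (dsym v) u x = ((m + 1).factorial : ℝ)⁻¹ * ∑ σ : Equiv.Perm (Fin (m + 1)),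
      fderiv ℝ (contr v fun j => u (σ j.castSucc)) x (u (σ (Fin.last m))) := by
  rw [dsym_eq_symz_derivTF, contr_symz]
  simp only [contr_derivTF _ _ _ fun q => (hv q).differentiableAt, Function.comp_apply]

theorem IsSchwartzTF.differentiable {n m : ℕ} {f : TF n m} (hf : IsSchwartzTF f)
    (q : Fin m → Fin n) : Differentiable ℝ fun x => f x q := by
  obtain ⟨g, hg⟩ := hf q
  exact hg ▸ g.differentiable

theorem IsSchwartzTF.exists_contr_eq {n m : ℕ} {f : TF n m} (hf : IsSchwartzTF f)
    (w : Fin m → E n) : ∃ g : 𝓢(E n, ℝ), contr f w = g := by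
  choose G hG using hf
  refine ⟨∑ q, (∏ j, w j (q j)) • G q, funext fun x => ?_⟩
  simp [contr, ← hG, mul_comm]

section Hyperplane

variable {n : ℕ} (g : 𝓢(E n, ℝ)) {ω a : E n}

theorem integrable_fderiv_hyperplane (ha : a ∈ (ℝ ∙ ω)ᗮ) (p : ℝ) :
    Integrable fun y : ((ℝ ∙ ω)ᗮ : Submodule ℝ (E n)) => fderiv ℝ g (p • ω + y) a := by
  simpa only [SchwartzMap.fderiv_compAddSubtype] using
    (SchwartzMap.compAddSubtype _ (p • ω) g).integrable_fderiv_apply volume ⟨a, ha⟩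

theorem hypInt_fderiv_eq_zero (ha : a ∈ (ℝ ∙ ω)ᗮ) (p : ℝ) :
    hypInt (fun x => fderiv ℝ g x a) ω p = 0 := by
  simpa only [hypInt, SchwartzMap.fderiv_compAddSubtype] using
    (SchwartzMap.compAddSubtype _ (p • ω) g).integral_fderiv_apply_eq_zero volume ⟨a, ha⟩

end Hyperplane

theorem stmt12_general {n m : ℕ} (v : TF n m) (hS : IsSchwartzTF v)
    (ω : E n) (b : Fin (n - 1) → E n)
    (hbperp : ∀ i, b i ∈ (ℝ ∙ ω)ᗮ)
    (p : ℝ) (u : Fin (m + 1) → E n) (hu : ∀ j, ∃ i, u j = b i) :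
    hypInt (contr (dsym v) u) ω p = 0 := by
  have hu_perp : ∀ j, u j ∈ (ℝ ∙ ω)ᗮ := fun j => by
    obtain ⟨i, hi⟩ := hu j
    exact hi ▸ hbperp i
  choose G hG using fun σ : Equiv.Perm (Fin (m + 1)) =>
    hS.exists_contr_eq fun j => u (σ j.castSucc)
  have hint σ := integrable_fderiv_hyperplane (G σ) (hu_perp (σ (Fin.last m))) p
  unfold hypInt
  simp only [contr_dsym v hS.differentiable, hG]
  rw [integral_const_mul, integral_finsetSum _ fun σ _ => hint σ]
  exact mul_eq_zero_of_right _ <|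
    Finset.sum_eq_zero fun σ _ => hypInt_fderiv_eq_zero (G σ) (hu_perp _) p

/-- The longitudinal Radon transform of a potential field `f = dv` vanishes: the integral of
`⟨dv, ω₁^{⊙ℓ₁} ⊙ ⋯ ⊙ ω_{n-1}^{⊙ℓ_{n-1}}⟩` over any hyperplane normal to `ω` is zero, where
`ω₁, …, ω_{n-1}` is an orthonormal basis of `ω^⊥`. -/
theorem stmt12 {n m : ℕ} (v : TF n m) (hS : IsSchwartzTF v) (hsym : IsSymTF v)
    (ω : E n) (hω : ‖ω‖ = 1) (b : Fin (n - 1) → E n) (hb : Orthonormal ℝ b)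
    (hbperp : ∀ i, b i ∈ (ℝ ∙ ω)ᗮ)
    (hspan : Submodule.span ℝ (Set.range b) = (ℝ ∙ ω)ᗮ)
    (p : ℝ) (u : Fin (m + 1) → E n) (hu : ∀ j, ∃ i, u j = b i) :
    hypInt (contr (dsym v) u) ω p = 0 :=
  stmt12_general v hS ω b hbperp p u hu

end
end
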